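/- Let X = ⨆_{λ∈Λ} G_λ be a multiple conjugation quandle, R a ring, and f₁, f₂ : X × X → R maps. If the set ⨆_{λ∈Λ} (G_λ × R) with operations (x,u) ◁ (y,v) = (x ◁ y, f₁(x,y)u + f₂(x,y)v) and, on each G_λ × R, (a,u)(b,v) = (ab, u + f₁(a,a⁻¹)v), is a multiple conjugation quandle (where R is regarded as a left R-module over itself), then (f₁, f₂) is an MCQ Alexander pair. -/

import Mathlib

universe u v w x u' v'

/-- The raw data of a disjoint union of "groups" `G l` (with multiplication `mul`,
identity `one` and inversion `inv` on each component) together with a binary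
operation `op` on the disjoint union `Σ l, G l`. -/
structure MCQData (Λ : Type u) (G : Λ → Type v) where
  mul : ∀ l : Λ, G l → G l → G l
  one : ∀ l : Λ, G l
  inv : ∀ l : Λ, G l → G l
  op  : (Σ l, G l) → (Σ l, G l) → (Σ l, G l)

namespace MCQData

variable {Λ : Type u} {G : Λ → Type v}

/-- Each component `G l` is a group with respect to the given data. -/
def IsGroupData (D : MCQData Λ G) : Prop :=
  (∀ (l : Λ) (a b c : G l), D.mul l (D.mul l a b) c = D.mul l a (D.mul l b c)) ∧
  (∀ (l : Λ) (a : G l), D.mul l (D.one l) a = a) ∧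
  (∀ (l : Λ) (a : G l), D.mul l a (D.one l) = a) ∧
  (∀ (l : Λ) (a : G l), D.mul l (D.inv l a) a = D.one l) ∧
  (∀ (l : Λ) (a : G l), D.mul l a (D.inv l a) = D.one l)

/-- `D` is a multiple conjugation quandle (MCQ): each component is a group,
the operation restricts to conjugation on each component, and the axioms of an
MCQ hold.  In the last axiom, `a ◁ x` and `b ◁ x` lie in a common component
`G m` and `(ab) ◁ x = (a ◁ x)(b ◁ x)` there. -/
def IsMCQ (D : MCQData Λ G) : Prop :=
  D.IsGroupData ∧
  (∀ (l : Λ) (a b : G l),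
    D.op ⟨l, a⟩ ⟨l, b⟩ = ⟨l, D.mul l (D.mul l (D.inv l b) a) b⟩) ∧
  (∀ (x : Σ l, G l) (l : Λ), D.op x ⟨l, D.one l⟩ = x) ∧
  (∀ (x : Σ l, G l) (l : Λ) (a b : G l),
    D.op x ⟨l, D.mul l a b⟩ = D.op (D.op x ⟨l, a⟩) ⟨l, b⟩) ∧
  (∀ x y z : Σ l, G l, D.op (D.op x y) z = D.op (D.op x z) (D.op y z)) ∧
  (∀ (l : Λ) (a b : G l) (x : Σ l, G l), ∃ (m : Λ) (a' b' : G m),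
    D.op ⟨l, a⟩ x = ⟨m, a'⟩ ∧ D.op ⟨l, b⟩ x = ⟨m, b'⟩ ∧
    D.op ⟨l, D.mul l a b⟩ x = ⟨m, D.mul m a' b'⟩)

/-- `(f₁, f₂)` is an MCQ Alexander pair for the MCQ `D` with values in the ring `R`. -/
def IsMCQAlexanderPair (D : MCQData Λ G) {R : Type w} [Ring R]
    (f₁ f₂ : (Σ l, G l) → (Σ l, G l) → R) : Prop :=
  (∀ (l : Λ) (a b : G l),
    f₁ ⟨l, a⟩ ⟨l, b⟩ + f₂ ⟨l, a⟩ ⟨l, b⟩ = f₁ ⟨l, a⟩ ⟨l, D.mul l (D.inv l a) b⟩) ∧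
  (∀ (l : Λ) (a b : G l) (x : Σ l, G l), f₁ ⟨l, a⟩ x = f₁ ⟨l, b⟩ x) ∧
  (∀ (l : Λ) (a b : G l) (x : Σ l, G l),
    f₂ ⟨l, D.mul l a b⟩ x =
      f₂ ⟨l, a⟩ x + f₁ (D.op ⟨l, b⟩ x) (D.op ⟨l, D.inv l a⟩ x) * f₂ ⟨l, b⟩ x) ∧
  (∀ (x : Σ l, G l) (l : Λ), f₁ x ⟨l, D.one l⟩ = 1) ∧
  (∀ (x : Σ l, G l) (l : Λ) (a b : G l),
    f₁ x ⟨l, D.mul l a b⟩ = f₁ (D.op x ⟨l, a⟩) ⟨l, b⟩ * f₁ x ⟨l, a⟩) ∧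
  (∀ (x : Σ l, G l) (l : Λ) (a b : G l),
    f₂ x ⟨l, D.mul l a b⟩ = f₁ (D.op x ⟨l, a⟩) ⟨l, b⟩ * f₂ x ⟨l, a⟩) ∧
  (∀ x y z : Σ l, G l, f₁ (D.op x y) z * f₁ x y = f₁ (D.op x z) (D.op y z) * f₁ x z) ∧
  (∀ x y z : Σ l, G l, f₁ (D.op x y) z * f₂ x y = f₂ (D.op x z) (D.op y z) * f₁ y z) ∧
  (∀ x y z : Σ l, G l, f₂ (D.op x y) z =
    f₁ (D.op x z) (D.op y z) * f₂ x z + f₂ (D.op x z) (D.op y z) * f₂ y z)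

/-- An MCQ homomorphism: `φ` preserves the operation `◁`, and for `a, b` in a common
component, `φ a`, `φ b` lie in a common component and `φ (ab) = (φ a)(φ b)`. -/
def IsMCQHom {Λ' : Type u'} {G' : Λ' → Type v'} (D : MCQData Λ G)
    (D' : MCQData Λ' G') (φ : (Σ l, G l) → (Σ l', G' l')) : Prop :=
  (∀ x y : Σ l, G l, φ (D.op x y) = D'.op (φ x) (φ y)) ∧
  (∀ (l : Λ) (a b : G l), ∃ (m : Λ') (a' b' : G' m),
    φ ⟨l, a⟩ = ⟨m, a'⟩ ∧ φ ⟨l, b⟩ = ⟨m, b'⟩ ∧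
    φ ⟨l, D.mul l a b⟩ = ⟨m, D'.mul m a' b'⟩)

/-- Conditions (0-i)--(0-iv) for the maps `f₃, f₄ : ⨆ (G l × G l) → R`. -/
def Conds0 (D : MCQData Λ G) {R : Type w} [Ring R]
    (f₃ f₄ : ∀ l : Λ, G l → G l → R) : Prop :=
  (∀ (l : Λ) (a b : G l), IsUnit (f₃ l a b) ∧ IsUnit (f₄ l a b)) ∧
  (∀ (l : Λ) (a b c : G l), f₃ l (D.mul l a b) c * f₃ l a b = f₃ l a (D.mul l b c)) ∧
  (∀ (l : Λ) (a b c : G l),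
    f₃ l (D.mul l a b) c * f₄ l a b = f₄ l a (D.mul l b c) * f₃ l b c) ∧
  (∀ (l : Λ) (a b c : G l), f₄ l (D.mul l a b) c = f₄ l a (D.mul l b c) * f₄ l b c)

/-- Conditions (0-i)--(4-iii) for the quadruple `(f₁, f₂, f₃, f₄)`.
In conditions (4-i)--(4-iii), the decompositions `a ◁ x = ⟨m, a'⟩` and
`b ◁ x = ⟨m, b'⟩` express that `a ◁ x` and `b ◁ x` lie in a common component `G m`. -/
def Conds (D : MCQData Λ G) {R : Type w} [Ring R]
    (f₁ f₂ : (Σ l, G l) → (Σ l, G l) → R) (f₃ f₄ : ∀ l : Λ, G l → G l → R) : Prop :=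
  Conds0 D f₃ f₄ ∧
  (∀ (l : Λ) (a b : G l),
    f₁ ⟨l, a⟩ ⟨l, b⟩ = f₄ l (D.inv l b) (D.mul l a b) * f₃ l a b) ∧
  (∀ (l : Λ) (a b : G l),
    f₂ ⟨l, a⟩ ⟨l, b⟩ =
      -(f₃ l (D.inv l b) (D.mul l a b) * f₄ l (D.inv l b) (D.one l) * f₃ l b (D.inv l b)) +
        f₄ l (D.inv l b) (D.mul l a b) * f₄ l a b) ∧
  (∀ (x : Σ l, G l) (l : Λ), f₁ x ⟨l, D.one l⟩ = 1) ∧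
  (∀ (x : Σ l, G l) (l : Λ) (a b : G l),
    f₁ x ⟨l, D.mul l a b⟩ = f₁ (D.op x ⟨l, a⟩) ⟨l, b⟩ * f₁ x ⟨l, a⟩) ∧
  (∀ (x : Σ l, G l) (l : Λ) (a b : G l),
    f₂ x ⟨l, D.mul l a b⟩ * f₃ l a b = f₁ (D.op x ⟨l, a⟩) ⟨l, b⟩ * f₂ x ⟨l, a⟩) ∧
  (∀ (x : Σ l, G l) (l : Λ) (a b : G l),
    f₂ x ⟨l, D.mul l a b⟩ * f₄ l a b = f₂ (D.op x ⟨l, a⟩) ⟨l, b⟩) ∧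
  (∀ x y z : Σ l, G l, f₁ (D.op x y) z * f₁ x y = f₁ (D.op x z) (D.op y z) * f₁ x z) ∧
  (∀ x y z : Σ l, G l, f₁ (D.op x y) z * f₂ x y = f₂ (D.op x z) (D.op y z) * f₁ y z) ∧
  (∀ x y z : Σ l, G l, f₂ (D.op x y) z =
    f₁ (D.op x z) (D.op y z) * f₂ x z + f₂ (D.op x z) (D.op y z) * f₂ y z) ∧
  (∀ (l : Λ) (a b : G l) (x : Σ l, G l) (m : Λ) (a' b' : G m),
    D.op ⟨l, a⟩ x = ⟨m, a'⟩ → D.op ⟨l, b⟩ x = ⟨m, b'⟩ →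
      f₁ ⟨l, D.mul l a b⟩ x * f₃ l a b = f₃ m a' b' * f₁ ⟨l, a⟩ x) ∧
  (∀ (l : Λ) (a b : G l) (x : Σ l, G l) (m : Λ) (a' b' : G m),
    D.op ⟨l, a⟩ x = ⟨m, a'⟩ → D.op ⟨l, b⟩ x = ⟨m, b'⟩ →
      f₁ ⟨l, D.mul l a b⟩ x * f₄ l a b = f₄ m a' b' * f₁ ⟨l, b⟩ x) ∧
  (∀ (l : Λ) (a b : G l) (x : Σ l, G l) (m : Λ) (a' b' : G m),
    D.op ⟨l, a⟩ x = ⟨m, a'⟩ → D.op ⟨l, b⟩ x = ⟨m, b'⟩ →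
      f₂ ⟨l, D.mul l a b⟩ x = f₃ m a' b' * f₂ ⟨l, a⟩ x + f₄ m a' b' * f₂ ⟨l, b⟩ x)

/-- The multiplication `(a,u)(b,v) = (ab, f₃(a,b)u + f₄(a,b)v)` on `G l × M`. -/
def quadMul (D : MCQData Λ G) {R : Type w} [Ring R] (f₃ f₄ : ∀ l : Λ, G l → G l → R)
    (M : Type x) [AddCommGroup M] [Module R M] (l : Λ) (p q : G l × M) : G l × M :=
  (D.mul l p.1 q.1, f₃ l p.1 q.1 • p.2 + f₄ l p.1 q.1 • q.2)

/-- The operation `(x,u) ◁ (y,v) = (x ◁ y, f₁(x,y)u + f₂(x,y)v)` on `⨆ (G l × M)`. -/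
def quadOp (D : MCQData Λ G) {R : Type w} [Ring R]
    (f₁ f₂ : (Σ l, G l) → (Σ l, G l) → R) (M : Type x) [AddCommGroup M] [Module R M]
    (z w : Σ l, G l × M) : Σ l, G l × M :=
  ⟨(D.op ⟨z.1, z.2.1⟩ ⟨w.1, w.2.1⟩).1,
    ((D.op ⟨z.1, z.2.1⟩ ⟨w.1, w.2.1⟩).2,
      f₁ ⟨z.1, z.2.1⟩ ⟨w.1, w.2.1⟩ • z.2.2 + f₂ ⟨z.1, z.2.1⟩ ⟨w.1, w.2.1⟩ • w.2.2)⟩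

/-- The data `X̃(f₁,f₂,f₃,f₄)` on `⨆ (G l × M)`. -/
def quadExt (D : MCQData Λ G) {R : Type w} [Ring R]
    (f₁ f₂ : (Σ l, G l) → (Σ l, G l) → R) (f₃ f₄ : ∀ l : Λ, G l → G l → R)
    (M : Type x) [AddCommGroup M] [Module R M] : MCQData Λ (fun l => G l × M) where
  mul := quadMul D f₃ f₄ M
  one l := (D.one l, 0)
  inv l p := (D.inv l p.1, -((f₄ l (D.inv l p.1) (D.one l) * f₃ l p.1 (D.inv l p.1)) • p.2))
  op := quadOp D f₁ f₂ M

/-- The multiplication `(a,u)(b,v) = (ab, u + f₁(a,a⁻¹)v)` on `G l × M`. -/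
def alexMul (D : MCQData Λ G) {R : Type w} [Ring R]
    (f₁ : (Σ l, G l) → (Σ l, G l) → R) (M : Type x) [AddCommGroup M] [Module R M]
    (l : Λ) (p q : G l × M) : G l × M :=
  (D.mul l p.1 q.1, p.2 + f₁ ⟨l, p.1⟩ ⟨l, D.inv l p.1⟩ • q.2)

/-- The data `X̃(f₁,f₂)` on `⨆ (G l × M)`, with identity `(e_l, 0)` and
inverse `(a,u)⁻¹ = (a⁻¹, -f₁(a,a)u)` on each component. -/
def alexExt (D : MCQData Λ G) {R : Type w} [Ring R]
    (f₁ f₂ : (Σ l, G l) → (Σ l, G l) → R) (M : Type x) [AddCommGroup M] [Module R M] :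
    MCQData Λ (fun l => G l × M) where
  mul := alexMul D f₁ M
  one l := (D.one l, 0)
  inv l p := (D.inv l p.1, -(f₁ ⟨l, p.1⟩ ⟨l, p.1⟩ • p.2))
  op := quadOp D f₁ f₂ M

/-- `(m, o, i)` satisfies the group axioms on `α`. -/
def GroupAxiomsOn {α : Type x} (m : α → α → α) (o : α) (i : α → α) : Prop :=
  (∀ a b c : α, m (m a b) c = m a (m b c)) ∧ (∀ a : α, m o a = a) ∧ (∀ a : α, m a o = a) ∧
  (∀ a : α, m (i a) a = o) ∧ (∀ a : α, m a (i a) = o)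

/-- The relation `(f₁,f₂,f₃,f₄) ∼ (g₁,g₂,g₃,g₄)`, witnessed by a map `h : X → Rˣ`. -/
def QuadRel (D : MCQData Λ G) {R : Type w} [Ring R]
    (f₁ f₂ g₁ g₂ : (Σ l, G l) → (Σ l, G l) → R)
    (f₃ f₄ g₃ g₄ : ∀ l : Λ, G l → G l → R) : Prop :=
  ∃ h : (Σ l, G l) → Rˣ,
    (∀ x y : Σ l, G l, (h (D.op x y) : R) * f₁ x y = g₁ x y * (h x : R)) ∧
    (∀ x y : Σ l, G l, (h (D.op x y) : R) * f₂ x y = g₂ x y * (h y : R)) ∧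
    (∀ (l : Λ) (a b : G l),
      (h ⟨l, D.mul l a b⟩ : R) * f₃ l a b = g₃ l a b * (h ⟨l, a⟩ : R)) ∧
    (∀ (l : Λ) (a b : G l),
      (h ⟨l, D.mul l a b⟩ : R) * f₄ l a b = g₄ l a b * (h ⟨l, b⟩ : R))

end MCQData

/-! The extension `X̃ = ⨆ (G l × R)` is affine in the `R`-coordinate, so each MCQ axiom of `X̃`,
read in the `R`-coordinate at points whose `R`-coordinates are `0` or `1`, yields one of the
identities of an Alexander pair. The group axioms of `X̃` force its identity to be `(e, 0)` and its
inversion to be `(a, u)⁻¹ = (a⁻¹, -f₁(a⁻¹, a) u)`; with these, the conjugation axiom gives (i), and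
the axiom `(ab) ◁ x = (a ◁ x)(b ◁ x)` gives (ii), using that `a⁻¹ ◁ x = (a ◁ x)⁻¹` in any MCQ. -/

namespace MCQData

variable {Λ : Type u} {G : Λ → Type v}

section GroupData

variable {D : MCQData Λ G} {l : Λ}

abbrev IsGroupData.group (hg : D.IsGroupData) (l : Λ) : Group (G l) where
  mul := D.mul l
  one := D.one l
  inv := D.inv l
  mul_assoc := hg.1 l
  one_mul := hg.2.1 l
  mul_one := hg.2.2.1 l
  inv_mul_cancel := hg.2.2.2.1 l

theorem IsGroupData.eq_one_of_mul_right (hg : D.IsGroupData) {a b : G l}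
    (h : D.mul l a b = a) : b = D.one l :=
  letI := hg.group l; mul_eq_left.mp h

theorem IsGroupData.eq_inv_of_mul_eq_one_left (hg : D.IsGroupData) {a b : G l}
    (h : D.mul l a b = D.one l) : a = D.inv l b :=
  letI := hg.group l; _root_.eq_inv_of_mul_eq_one_left h

theorem IsGroupData.eq_inv_of_mul_eq_one_right (hg : D.IsGroupData) {a b : G l}
    (h : D.mul l a b = D.one l) : b = D.inv l a :=
  letI := hg.group l; _root_.eq_inv_of_mul_eq_one_right h

theorem IsGroupData.inv_inv (hg : D.IsGroupData) (a : G l) : D.inv l (D.inv l a) = a :=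
  letI := hg.group l; _root_.inv_inv a

theorem IsGroupData.mul_inv_cancel_left (hg : D.IsGroupData) (a b : G l) :
    D.mul l a (D.mul l (D.inv l a) b) = b :=
  letI := hg.group l; _root_.mul_inv_cancel_left a b

theorem IsGroupData.mul_inv_rev (hg : D.IsGroupData) (a b : G l) :
    D.inv l (D.mul l a b) = D.mul l (D.inv l b) (D.inv l a) :=
  letI := hg.group l; _root_.mul_inv_rev a b

end GroupData

section MCQ

variable {D : MCQData Λ G}

def sigmaInv (D : MCQData Λ G) (y : Σ l, G l) : Σ l, G l := ⟨y.1, D.inv y.1 y.2⟩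

theorem IsMCQ.op_one (hD : D.IsMCQ) (l : Λ) (x : Σ l, G l) :
    ∃ m : Λ, D.op ⟨l, D.one l⟩ x = ⟨m, D.one m⟩ := by
  obtain ⟨m, p, q, hp, hq, hpq⟩ := hD.2.2.2.2.2 l (D.one l) (D.one l) x
  have hqp : q = p := sigma_mk_injective (hq.symm.trans hp)
  rw [hD.1.2.1, hp] at hpq
  have hq_one : q = D.one m := hD.1.eq_one_of_mul_right (sigma_mk_injective hpq).symm
  exact ⟨m, by rw [hp, ← hqp, hq_one]⟩

theorem IsMCQ.op_inv (hD : D.IsMCQ) (l : Λ) (a : G l) (x : Σ l, G l) :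
    D.op ⟨l, D.inv l a⟩ x = D.sigmaInv (D.op ⟨l, a⟩ x) := by
  obtain ⟨m, p, q, hp, hq, hpq⟩ := hD.2.2.2.2.2 l a (D.inv l a) x
  obtain ⟨m', hone⟩ := hD.op_one l x
  rw [hD.1.2.2.2.2, hone] at hpq
  obtain ⟨rfl, hpq⟩ := Sigma.mk.inj_iff.mp hpq
  rw [hq, hp, hD.1.eq_inv_of_mul_eq_one_right (eq_of_heq hpq).symm, sigmaInv]

end MCQ

section Extension

variable {M : Type x}

def lift (x : Σ l, G l) (u : M) : Σ l, G l × M := ⟨x.1, (x.2, u)⟩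

@[simp] theorem lift_snd_snd (x : Σ l, G l) (u : M) : (lift x u).2.2 = u := rfl

@[simp] theorem mk_eq_lift (l : Λ) (a : G l) (u : M) :
    (⟨l, (a, u)⟩ : Σ l, G l × M) = lift ⟨l, a⟩ u := rfl

/-- `X̃(f₁,f₂)` as in `alexExt`, but with arbitrary identities `o` and inversions `i`. -/
def alexData {R : Type w} [Ring R] (D : MCQData Λ G) (f₁ f₂ : (Σ l, G l) → (Σ l, G l) → R)
    (M : Type x) [AddCommGroup M] [Module R M] (o : ∀ l, G l × M) (i : ∀ l, G l × M → G l × M) :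
    MCQData Λ fun l => G l × M :=
  ⟨alexMul D f₁ M, o, i, quadOp D f₁ f₂ M⟩

variable {R : Type w} [Ring R] [AddCommGroup M] [Module R M] {D : MCQData Λ G}
  {f₁ f₂ : (Σ l, G l) → (Σ l, G l) → R} {o : ∀ l, G l × M} {i : ∀ l, G l × M → G l × M}

@[simp] theorem alexData_op_lift (x y : Σ l, G l) (u v : M) :
    (alexData D f₁ f₂ M o i).op (lift x u) (lift y v) =
      lift (D.op x y) (f₁ x y • u + f₂ x y • v) := rfl

@[simp] theorem alexData_mul (l : Λ) (p q : G l × M) :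
    (alexData D f₁ f₂ M o i).mul l p q =
      (D.mul l p.1 q.1, p.2 + f₁ ⟨l, p.1⟩ ⟨l, D.inv l p.1⟩ • q.2) := rfl

@[simp] theorem alexData_one (l : Λ) : (alexData D f₁ f₂ M o i).one l = o l := rfl

@[simp] theorem alexData_inv (l : Λ) (p : G l × M) :
    (alexData D f₁ f₂ M o i).inv l p = i l p := rfl

theorem alexData_one_eq (hg : D.IsGroupData) (hE : (alexData D f₁ f₂ M o i).IsGroupData)
    (l : Λ) : o l = (D.one l, 0) := by
  have h := hE.2.1 l (D.one l, 0)
  simp only [alexData_mul, alexData_one, hg.2.2.1, smul_zero, add_zero] at h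
  exact h

theorem alexData_inv_eq (hg : D.IsGroupData) (hE : (alexData D f₁ f₂ M o i).IsGroupData)
    (l : Λ) (p : G l × M) :
    i l p = (D.inv l p.1, -(f₁ ⟨l, D.inv l p.1⟩ ⟨l, p.1⟩ • p.2)) := by
  have h := hE.2.2.2.1 l p
  simp only [alexData_mul, alexData_inv, alexData_one, alexData_one_eq hg hE, Prod.mk.injEq] at h
  have h1 := hg.eq_inv_of_mul_eq_one_left h.1
  rw [h1, hg.inv_inv] at h
  exact Prod.ext h1 (eq_neg_of_add_eq_zero_left h.2)

end Extension

section AlexanderPair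

variable {R : Type w} [Ring R] {D : MCQData Λ G} {f₁ f₂ : (Σ l, G l) → (Σ l, G l) → R}
  {o : ∀ l, G l × R} {i : ∀ l, G l × R → G l × R}

theorem alexData_fiber_op_of_mul (hE : (alexData D f₁ f₂ R o i).IsMCQ) (l : Λ) (a b : G l)
    (x : Σ l, G l) (u t : R) :
    f₁ ⟨l, D.mul l a b⟩ x * u + f₂ ⟨l, D.mul l a b⟩ x * t =
      f₁ ⟨l, a⟩ x * u + f₂ ⟨l, a⟩ x * t +
        f₁ (D.op ⟨l, a⟩ x) (D.sigmaInv (D.op ⟨l, a⟩ x)) * (f₂ ⟨l, b⟩ x * t) := by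
  obtain ⟨m, a', b', ha, hb, hab⟩ := hE.2.2.2.2.2 l (a, u) (b, 0) (lift x t)
  simp only [alexData_mul, smul_zero, add_zero, mk_eq_lift, alexData_op_lift] at ha hb hab
  have hbase : D.op ⟨l, a⟩ x = ⟨m, a'.1⟩ :=
    congrArg (fun z : Σ l, G l × R => (⟨z.1, z.2.1⟩ : Σ l, G l)) ha
  have ha' := congrArg (·.2.2) ha
  have hb' := congrArg (·.2.2) hb
  have hab' := congrArg (·.2.2) hab
  simp only [lift_snd_snd, smul_eq_mul, zero_add] at ha' hb' hab'
  rw [hbase, ha', hb']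
  exact hab'

theorem alexData_f₁_left_eq (hg : D.IsGroupData) (hE : (alexData D f₁ f₂ R o i).IsMCQ)
    (l : Λ) (a b : G l) (x : Σ l, G l) : f₁ ⟨l, a⟩ x = f₁ ⟨l, b⟩ x := by
  simpa [hg.mul_inv_cancel_left] using
    (alexData_fiber_op_of_mul hE l a (D.mul l (D.inv l a) b) x 1 0).symm

theorem alexData_f₂_mul_left (hD : D.IsMCQ) (hE : (alexData D f₁ f₂ R o i).IsMCQ)
    (l : Λ) (a b : G l) (x : Σ l, G l) :
    f₂ ⟨l, D.mul l a b⟩ x =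
      f₂ ⟨l, a⟩ x + f₁ (D.op ⟨l, b⟩ x) (D.op ⟨l, D.inv l a⟩ x) * f₂ ⟨l, b⟩ x := by
  obtain ⟨m, a', b', ha, hb, -⟩ := hD.2.2.2.2.2 l a b x
  have h := alexData_fiber_op_of_mul hE l a b x 0 1
  simp only [mul_zero, mul_one, zero_add] at h
  rw [h, hD.op_inv, ha, hb, alexData_f₁_left_eq hD.1 hE m a' b']

theorem alexData_f₁_add_f₂ (hg : D.IsGroupData) (hE : (alexData D f₁ f₂ R o i).IsMCQ)
    (l : Λ) (a b : G l) :
    f₁ ⟨l, a⟩ ⟨l, b⟩ + f₂ ⟨l, a⟩ ⟨l, b⟩ =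
      f₁ ⟨l, a⟩ ⟨l, D.mul l (D.inv l a) b⟩ := by
  have h := congrArg (·.2.2) (hE.2.1 l (a, 1) (b, 1))
  simp only [mk_eq_lift, alexData_op_lift, alexData_mul, alexData_inv, alexData_inv_eq hg hE.1,
    hg.inv_inv, hg.mul_inv_rev, lift_snd_snd, smul_eq_mul, mul_one, neg_add_cancel, zero_add] at h
  rw [h, alexData_f₁_left_eq hg hE l (D.mul l (D.inv l b) a) a]

theorem alexData_f₁_one_right (hg : D.IsGroupData) (hE : (alexData D f₁ f₂ R o i).IsMCQ)
    (x : Σ l, G l) (l : Λ) : f₁ x ⟨l, D.one l⟩ = 1 := by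
  have h := hE.2.2.1 (lift x 1) l
  rw [alexData_one, alexData_one_eq hg hE.1] at h
  simpa using congrArg (·.2.2) h

theorem alexData_f₁_mul_right (hE : (alexData D f₁ f₂ R o i).IsMCQ)
    (x : Σ l, G l) (l : Λ) (a b : G l) :
    f₁ x ⟨l, D.mul l a b⟩ = f₁ (D.op x ⟨l, a⟩) ⟨l, b⟩ * f₁ x ⟨l, a⟩ := by
  simpa using congrArg (·.2.2) (hE.2.2.2.1 (lift x 1) l (a, 0) (b, 0))

theorem alexData_f₂_mul_right (hE : (alexData D f₁ f₂ R o i).IsMCQ)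
    (x : Σ l, G l) (l : Λ) (a b : G l) :
    f₂ x ⟨l, D.mul l a b⟩ = f₁ (D.op x ⟨l, a⟩) ⟨l, b⟩ * f₂ x ⟨l, a⟩ := by
  simpa using congrArg (·.2.2) (hE.2.2.2.1 (lift x 0) l (a, 1) (b, 0))

theorem alexData_f₁_op_mul_f₁ (hE : (alexData D f₁ f₂ R o i).IsMCQ) (x y z : Σ l, G l) :
    f₁ (D.op x y) z * f₁ x y = f₁ (D.op x z) (D.op y z) * f₁ x z := by
  simpa using congrArg (·.2.2) (hE.2.2.2.2.1 (lift x 1) (lift y 0) (lift z 0))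

theorem alexData_f₁_op_mul_f₂ (hE : (alexData D f₁ f₂ R o i).IsMCQ) (x y z : Σ l, G l) :
    f₁ (D.op x y) z * f₂ x y = f₂ (D.op x z) (D.op y z) * f₁ y z := by
  simpa using congrArg (·.2.2) (hE.2.2.2.2.1 (lift x 0) (lift y 1) (lift z 0))

theorem alexData_f₂_op_left (hE : (alexData D f₁ f₂ R o i).IsMCQ) (x y z : Σ l, G l) :
    f₂ (D.op x y) z =
      f₁ (D.op x z) (D.op y z) * f₂ x z + f₂ (D.op x z) (D.op y z) * f₂ y z := by
  simpa using congrArg (·.2.2) (hE.2.2.2.2.1 (lift x 0) (lift y 0) (lift z 1))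

end AlexanderPair

end MCQData

open MCQData in
/-- if `⨆ (G l × R)` with `(x,u) ◁ (y,v) = (x ◁ y, f₁(x,y)u + f₂(x,y)v)`
and `(a,u)(b,v) = (ab, u + f₁(a,a⁻¹)v)` is an MCQ (for some identity and inversion
data), then `(f₁, f₂)` is an MCQ Alexander pair. -/
theorem mcq_gives_alexander_pair {Λ : Type u} {G : Λ → Type v} {R : Type w} [Ring R]
    (D : MCQData Λ G) (hD : D.IsMCQ)
    (f₁ f₂ : (Σ l, G l) → (Σ l, G l) → R)
    (h : ∃ (o : ∀ l : Λ, G l × R) (i : ∀ l : Λ, G l × R → G l × R),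
      (MCQData.mk (MCQData.alexMul D f₁ R) o i (MCQData.quadOp D f₁ f₂ R) :
        MCQData Λ fun l => G l × R).IsMCQ) :
    D.IsMCQAlexanderPair f₁ f₂ := by
  obtain ⟨o, i, hE⟩ := h
  change (alexData D f₁ f₂ R o i).IsMCQ at hE
  exact ⟨alexData_f₁_add_f₂ hD.1 hE, alexData_f₁_left_eq hD.1 hE, alexData_f₂_mul_left hD hE,
    alexData_f₁_one_right hD.1 hE, alexData_f₁_mul_right hE, alexData_f₂_mul_right hE,
    alexData_f₁_op_mul_f₁ hE, alexData_f₁_op_mul_f₂ hE, alexData_f₂_op_left hE⟩
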